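/- Let f, h : ℝⁿ → ℝ be differentiable convex functions with f σ-uniformly convex with respect to h (D_f(y,x) ≥ σ D_h(y,x) for all x,y, σ ≥ 0), h twice differentiable, x* a minimizer of f, and let α, δ, η, ν : [t₀,T] → ℝ be differentiable functions satisfying: (i) ν̇(t) ≤ e^{α(t)}; (ii) −[δ̇+η̇−α̇−e^{α}] + [ν̇+η̇] ≤ 0; (iii) [δ̇+η̇−α̇−e^{α}] − σ e^{−η+α} ≤ 0; (iv) −[δ̇+η̇−α̇−e^{α}] ≤ 0 on [t₀,T]. If (x(t), z(t)) solves the system ẋ = e^{α}(z − x), ∇²h(z) ż = −(δ̇+η̇−α̇−e^{α})[∇h(z) − ∇h(x)] − e^{−η+α} ∇f(x), then V(t) = e^{ν(t)} ( e^{η(t)} D_h(x*, z(t)) + f(x(t)) − f(x*) ) satisfies V̇(t) ≤ 0 on [t₀,T]. -/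

import Mathlib

/-!
Write `c = δ' + η' - α' - e^α` and `E = e^η D_h(x*, z) + f(x) - f(x*)`, so that `V = e^ν E`.
Substituting the two equations of motion into `Ė` and using the three-point identity
`D_h(p, z) + D_h(z, x) - D_h(p, x) = ⟪∇h(x) - ∇h(z), p - z⟫` gives
`V̇ = e^ν ((ν' + η' - c) e^η D_h(x*, z) + (c e^η D_h(x*, x) - e^α D_f(x*, x))
  - c e^η D_h(z, x) + (ν' - e^α) (f(x) - f(x*)))`.
Since Bregman divergences of the convex `h` are nonnegative, the four terms are nonpositive by
(ii), by (iii) with uniform convexity, by (iv), and by (i) with the minimality of `x*`.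
-/

open Real Set

local notation "⟪" x ", " y "⟫" => @inner ℝ _ _ x y

theorem antitoneOn_of_forall_hasDerivAt_nonpos {D : Set ℝ} (hD : Convex ℝ D) {f : ℝ → ℝ}
    (hf : ∀ x ∈ D, ∃ f', HasDerivAt f f' x ∧ f' ≤ 0) : AntitoneOn f D := by
  choose f' hf' hf'_nonpos using hf
  refine antitoneOn_of_deriv_nonpos hD
    (fun x hx => (hf' x hx).continuousAt.continuousWithinAt)
    (fun x hx => (hf' x (interior_subset hx)).differentiableAt.differentiableWithinAt)
    fun x hx => ?_
  rw [(hf' x (interior_subset hx)).deriv]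
  exact hf'_nonpos x _

section Bregman

variable {E : Type*} [NormedAddCommGroup E] [InnerProductSpace ℝ E]

def bregmanDiv (f : E → ℝ) (f' : E → E) (y x : E) : ℝ := f y - f x - ⟪f' x, y - x⟫

theorem bregmanDiv_three_point (f : E → ℝ) (f' : E → E) (p w u : E) :
    bregmanDiv f f' p w + bregmanDiv f f' w u - bregmanDiv f f' p u = ⟪f' u - f' w, p - w⟫ := by
  simp only [bregmanDiv, inner_sub_left, inner_sub_right]
  ring

-- With `u, w = x(t), z(t)` the left side is `-β ⟪∇²h(z) ż, p - z⟫ + ⟪∇f(x), ẋ⟫` with both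
-- equations of motion inserted; `b β = a` stands for `e^(-η+α) e^η = e^α`.
theorem mirrorFlow_dissipation_eq {f h : E → ℝ} {f' h' : E → E} {a b β c : ℝ} (hab : b * β = a)
    (p w u : E) :
    -(β * ⟪-c • (h' w - h' u) - b • f' u, p - w⟫) + ⟪f' u, a • (w - u)⟫
      = -(c * β * (bregmanDiv h h' p w + bregmanDiv h h' w u - bregmanDiv h h' p u))
        - a * (f u - f p) - a * bregmanDiv f f' p u := by
  rw [bregmanDiv_three_point, ← hab]
  simp only [bregmanDiv, inner_sub_left, inner_sub_right, real_inner_smul_left,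
    real_inner_smul_right]
  ring

variable [CompleteSpace E]

theorem HasGradientAt.comp_hasDerivAt {f : E → ℝ} {f' γ' : E} {γ : ℝ → E} {t : ℝ}
    (hf : HasGradientAt f f' (γ t)) (hγ : HasDerivAt γ γ' t) :
    HasDerivAt (fun s => f (γ s)) ⟪f', γ'⟫ t := by
  simpa [Function.comp_def] using hf.hasFDerivAt.comp_hasDerivAt t hγ

theorem ConvexOn.add_inner_le_of_hasGradientAt {f : E → ℝ} {f' x : E}
    (hf : ConvexOn ℝ univ f) (hgrad : HasGradientAt f f' x) (y : E) :
    f x + ⟪f', y - x⟫ ≤ f y := by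
  have hline : ConvexOn ℝ univ (fun s => f (AffineMap.lineMap (k := ℝ) x y s)) :=
    hf.comp_affineMap (AffineMap.lineMap x y)
  have hderiv : HasDerivAt (fun s => f (AffineMap.lineMap (k := ℝ) x y s)) ⟪f', y - x⟫ 0 :=
    HasGradientAt.comp_hasDerivAt (by simpa using hgrad) AffineMap.hasDerivAt_lineMap
  have hslope := hline.le_slope_of_hasDerivAt (mem_univ 0) (mem_univ 1) one_pos hderiv
  simp only [slope_def_field, AffineMap.lineMap_apply_one, AffineMap.lineMap_apply_zero,
    sub_zero, div_one] at hslope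
  linarith

theorem bregmanDiv_nonneg {f : E → ℝ} {f' : E → E} (hf : ConvexOn ℝ univ f) {x : E}
    (hgrad : HasGradientAt f (f' x) x) (y : E) : 0 ≤ bregmanDiv f f' y x := by
  have := hf.add_inner_le_of_hasGradientAt hgrad y
  unfold bregmanDiv
  linarith

theorem hasDerivAt_bregmanDiv_const_left {f : E → ℝ} {f' : E → E} {f'' : E → E →L[ℝ] E}
    {z : ℝ → E} {z' p : E} {t : ℝ} (hgrad : HasGradientAt f (f' (z t)) (z t))
    (hhess : HasFDerivAt f' (f'' (z t)) (z t)) (hz : HasDerivAt z z' t) :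
    HasDerivAt (fun s => bregmanDiv f f' p (z s)) (-⟪f'' (z t) z', p - z t⟫) t := by
  have hinner := (hhess.comp_hasDerivAt t hz).inner ℝ ((hasDerivAt_const t p).sub hz)
  refine (((hasDerivAt_const t (f p)).sub (hgrad.comp_hasDerivAt hz)).sub hinner).congr_deriv ?_
  simp only [Function.comp_apply, Pi.sub_apply, zero_sub, inner_neg_right]
  ring

theorem hasDerivAt_lyapunov {f h : E → ℝ} {f' h' : E → E} {h'' : E → E →L[ℝ] E}
    {ν η : ℝ → ℝ} {x z : ℝ → E} {ν' η' : ℝ} {x' z' p : E} {t : ℝ}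
    (hν : HasDerivAt ν ν' t) (hη : HasDerivAt η η' t) (hx : HasDerivAt x x' t)
    (hz : HasDerivAt z z' t) (hfgrad : HasGradientAt f (f' (x t)) (x t))
    (hhgrad : HasGradientAt h (h' (z t)) (z t)) (hhess : HasFDerivAt h' (h'' (z t)) (z t)) :
    HasDerivAt (fun s => exp (ν s) * (exp (η s) * bregmanDiv h h' p (z s) + (f (x s) - f p)))
      (exp (ν t) * (ν' * (exp (η t) * bregmanDiv h h' p (z t) + (f (x t) - f p))
        + (η' * exp (η t) * bregmanDiv h h' p (z t)
          + (-(exp (η t) * ⟪h'' (z t) z', p - z t⟫) + ⟪f' (x t), x'⟫)))) t := by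
  have henergy := (hη.exp.mul (hasDerivAt_bregmanDiv_const_left (p := p) hhgrad hhess hz)).add
    ((hfgrad.comp_hasDerivAt hx).sub_const (f p))
  exact (hν.exp.mul henergy).congr_deriv (by simp only [Pi.add_apply, Pi.mul_apply]; ring)

end Bregman

theorem lyapunov_rate_nonpos {a b β c σ ν' η' Dpz Dzx Dpx Dfpx gap : ℝ}
    (ha : 0 ≤ a) (hβ : 0 ≤ β) (hab : b * β = a) (hc : 0 ≤ c) (hνη : ν' + η' ≤ c)
    (hcσ : c ≤ σ * b) (hν : ν' ≤ a) (hDpz : 0 ≤ Dpz) (hDzx : 0 ≤ Dzx) (hDpx : 0 ≤ Dpx)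
    (hunif : σ * Dpx ≤ Dfpx) (hgap : 0 ≤ gap) :
    ν' * (β * Dpz + gap) + (η' * β * Dpz + (-(c * β * (Dpz + Dzx - Dpx)) - a * gap - a * Dfpx))
      ≤ 0 := by
  have hpz : (ν' + η' - c) * (β * Dpz) ≤ 0 :=
    mul_nonpos_of_nonpos_of_nonneg (by linarith) (mul_nonneg hβ hDpz)
  have hpx : c * β * Dpx ≤ a * Dfpx :=
    calc c * β * Dpx ≤ σ * b * β * Dpx := by gcongr
      _ = a * (σ * Dpx) := by rw [← hab]; ring
      _ ≤ a * Dfpx := by gcongr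
  have hzx : 0 ≤ c * β * Dzx := by positivity
  have hgap_term : (ν' - a) * gap ≤ 0 := mul_nonpos_of_nonpos_of_nonneg (by linarith) hgap
  linarith

theorem lyapunov_nonincreasing_general (n : ℕ)
    (f h : EuclideanSpace ℝ (Fin n) → ℝ)
    (f' h' : EuclideanSpace ℝ (Fin n) → EuclideanSpace ℝ (Fin n))
    (h'' : EuclideanSpace ℝ (Fin n) → EuclideanSpace ℝ (Fin n) →L[ℝ] EuclideanSpace ℝ (Fin n))
    (hhconv : ConvexOn ℝ Set.univ h)
    (hfgrad : ∀ x, HasGradientAt f (f' x) x)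
    (hhgrad : ∀ x, HasGradientAt h (h' x) x)
    (hhess : ∀ x, HasFDerivAt h' (h'' x) x)
    (Df Dh : EuclideanSpace ℝ (Fin n) → EuclideanSpace ℝ (Fin n) → ℝ)
    (hDf : ∀ y x, Df y x = f y - f x - ⟪f' x, y - x⟫)
    (hDh : ∀ y x, Dh y x = h y - h x - ⟪h' x, y - x⟫)
    (σ : ℝ)
    (hunif : ∀ x y, σ * Dh y x ≤ Df y x)
    (xstar : EuclideanSpace ℝ (Fin n)) (hmin : ∀ y, f xstar ≤ f y)
    (t₀ T : ℝ)
    (α η ν α' δ' η' ν' : ℝ → ℝ)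
    (hη : ∀ t ∈ Set.Icc t₀ T, HasDerivAt η (η' t) t)
    (hν : ∀ t ∈ Set.Icc t₀ T, HasDerivAt ν (ν' t) t)
    (cond1 : ∀ t ∈ Set.Icc t₀ T, ν' t ≤ Real.exp (α t))
    (cond2 : ∀ t ∈ Set.Icc t₀ T,
      -(δ' t + η' t - α' t - Real.exp (α t)) + (ν' t + η' t) ≤ 0)
    (cond3 : ∀ t ∈ Set.Icc t₀ T,
      (δ' t + η' t - α' t - Real.exp (α t)) - σ * Real.exp (-η t + α t) ≤ 0)
    (cond4 : ∀ t ∈ Set.Icc t₀ T,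
      -(δ' t + η' t - α' t - Real.exp (α t)) ≤ 0)
    (x z z' : ℝ → EuclideanSpace ℝ (Fin n))
    (hxode : ∀ t ∈ Set.Icc t₀ T,
      HasDerivAt x (Real.exp (α t) • (z t - x t)) t)
    (hzdiff : ∀ t ∈ Set.Icc t₀ T, HasDerivAt z (z' t) t)
    (hzode : ∀ t ∈ Set.Icc t₀ T,
      h'' (z t) (z' t) =
        -(δ' t + η' t - α' t - Real.exp (α t)) • (h' (z t) - h' (x t))
          - Real.exp (-η t + α t) • f' (x t))
    (V : ℝ → ℝ)
    (hV : ∀ t, V t = Real.exp (ν t) *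
      (Real.exp (η t) * Dh xstar (z t) + (f (x t) - f xstar))) :
    AntitoneOn V (Set.Icc t₀ T) := by
  obtain rfl : Dh = bregmanDiv h h' := funext₂ hDh
  obtain rfl : Df = bregmanDiv f f' := funext₂ hDf
  rw [funext hV]
  refine antitoneOn_of_forall_hasDerivAt_nonpos (convex_Icc t₀ T) fun t ht =>
    ⟨_, hasDerivAt_lyapunov (hν t ht) (hη t ht) (hxode t ht) (hzdiff t ht) (hfgrad _)
      (hhgrad _) (hhess _), ?_⟩
  have hexp : exp (-η t + α t) * exp (η t) = exp (α t) := by rw [← exp_add]; ring_nf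
  rw [hzode t ht, mirrorFlow_dissipation_eq hexp]
  refine mul_nonpos_of_nonneg_of_nonpos (exp_nonneg _) (lyapunov_rate_nonpos (exp_nonneg _)
    (exp_nonneg _) hexp (by linarith [cond4 t ht]) (by linarith [cond2 t ht])
    (by linarith [cond3 t ht]) (cond1 t ht) (bregmanDiv_nonneg hhconv (hhgrad _) _)
    (bregmanDiv_nonneg hhconv (hhgrad _) _) (bregmanDiv_nonneg hhconv (hhgrad _) _)
    (hunif _ _) (sub_nonneg.2 (hmin _)))

theorem lyapunov_nonincreasing (n : ℕ)
    (f h : EuclideanSpace ℝ (Fin n) → ℝ)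
    (f' h' : EuclideanSpace ℝ (Fin n) → EuclideanSpace ℝ (Fin n))
    (h'' : EuclideanSpace ℝ (Fin n) → EuclideanSpace ℝ (Fin n) →L[ℝ] EuclideanSpace ℝ (Fin n))
    (hfconv : ConvexOn ℝ Set.univ f) (hhconv : ConvexOn ℝ Set.univ h)
    (hfgrad : ∀ x, HasGradientAt f (f' x) x)
    (hhgrad : ∀ x, HasGradientAt h (h' x) x)
    (hhess : ∀ x, HasFDerivAt h' (h'' x) x)
    (Df Dh : EuclideanSpace ℝ (Fin n) → EuclideanSpace ℝ (Fin n) → ℝ)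
    (hDf : ∀ y x, Df y x = f y - f x - ⟪f' x, y - x⟫)
    (hDh : ∀ y x, Dh y x = h y - h x - ⟪h' x, y - x⟫)
    (σ : ℝ) (hσ : 0 ≤ σ)
    (hunif : ∀ x y, σ * Dh y x ≤ Df y x)
    (xstar : EuclideanSpace ℝ (Fin n)) (hmin : ∀ y, f xstar ≤ f y)
    (t₀ T : ℝ)
    (α δ η ν α' δ' η' ν' : ℝ → ℝ)
    (hα : ∀ t ∈ Set.Icc t₀ T, HasDerivAt α (α' t) t)
    (hδ : ∀ t ∈ Set.Icc t₀ T, HasDerivAt δ (δ' t) t)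
    (hη : ∀ t ∈ Set.Icc t₀ T, HasDerivAt η (η' t) t)
    (hν : ∀ t ∈ Set.Icc t₀ T, HasDerivAt ν (ν' t) t)
    (cond1 : ∀ t ∈ Set.Icc t₀ T, ν' t ≤ Real.exp (α t))
    (cond2 : ∀ t ∈ Set.Icc t₀ T,
      -(δ' t + η' t - α' t - Real.exp (α t)) + (ν' t + η' t) ≤ 0)
    (cond3 : ∀ t ∈ Set.Icc t₀ T,
      (δ' t + η' t - α' t - Real.exp (α t)) - σ * Real.exp (-η t + α t) ≤ 0)
    (cond4 : ∀ t ∈ Set.Icc t₀ T,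
      -(δ' t + η' t - α' t - Real.exp (α t)) ≤ 0)
    (x z z' : ℝ → EuclideanSpace ℝ (Fin n))
    (hxode : ∀ t ∈ Set.Icc t₀ T,
      HasDerivAt x (Real.exp (α t) • (z t - x t)) t)
    (hzdiff : ∀ t ∈ Set.Icc t₀ T, HasDerivAt z (z' t) t)
    (hzode : ∀ t ∈ Set.Icc t₀ T,
      h'' (z t) (z' t) =
        -(δ' t + η' t - α' t - Real.exp (α t)) • (h' (z t) - h' (x t))
          - Real.exp (-η t + α t) • f' (x t))
    (V : ℝ → ℝ)
    (hV : ∀ t, V t = Real.exp (ν t) *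
      (Real.exp (η t) * Dh xstar (z t) + (f (x t) - f xstar))) :
    AntitoneOn V (Set.Icc t₀ T) :=
  lyapunov_nonincreasing_general n f h f' h' h'' hhconv hfgrad hhgrad hhess Df Dh hDf hDh σ hunif
    xstar hmin t₀ T α η ν α' δ' η' ν' hη hν cond1 cond2 cond3 cond4 x z z' hxode hzdiff hzode V hV
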